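/- Let D be an E-simple domain with maximal subfield K (the set of Egyptian elements together with 0). Let f ∈ D \ K and u ∈ K nonzero. Then 1/(f+u) and 1/f are associates in R(D): they differ by multiplication by a unit of R(D). -/

import Mathlib

noncomputable def recip (D : Type*) [CommRing D] [IsDomain D] : Subring (FractionRing D) :=
  Subring.closure {x | ∃ d : D, d ≠ 0 ∧ x = (algebraMap D (FractionRing D) d)⁻¹}

/-- `D` is E-simple: every nonzero Egyptian element is a unit. -/
def ESimple (D : Type*) [CommRing D] [IsDomain D] : Prop :=
  ∀ d : D, d ≠ 0 → algebraMap D (FractionRing D) d ∈ recip D → IsUnit d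

/-! If `x⁻¹` and `y⁻¹` lie in a subring `R` of a field together with `x - y`, then
`y / x = 1 - (x - y) x⁻¹` and `x / y = 1 + (x - y) y⁻¹` are mutually inverse elements of `R`,
and `x⁻¹ = (y / x) y⁻¹`. Take `x = f + u`, `y = f`; neither vanishes because `f`, and hence
`f + u`, is not Egyptian, while `0` is. -/

theorem Subring.exists_unit_inv_eq_mul_inv {F : Type*} [Field F] {R : Subring F} {x y : F}
    (hx : x ≠ 0) (hy : y ≠ 0) (hxR : x⁻¹ ∈ R) (hyR : y⁻¹ ∈ R) (hxy : x - y ∈ R) :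
    ∃ w : Rˣ, x⁻¹ = w * y⁻¹ := by
  have hyx : y / x ∈ R := by
    rw [show y / x = 1 - (x - y) * x⁻¹ by field_simp; ring]
    exact sub_mem (one_mem R) (mul_mem hxy hxR)
  have hxy' : x / y ∈ R := by
    rw [show x / y = 1 + (x - y) * y⁻¹ by field_simp; ring]
    exact add_mem (one_mem R) (mul_mem hxy hyR)
  have hmul : (⟨y / x, hyx⟩ : R) * ⟨x / y, hxy'⟩ = 1 := by
    ext
    simp only [MulMemClass.mk_mul_mk, OneMemClass.coe_one]
    field_simp
  exact ⟨Units.mkOfMulEqOne _ _ hmul, by simp only [Units.val_mkOfMulEqOne]; field_simp⟩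

theorem inv_algebraMap_mem_recip {D : Type*} [CommRing D] [IsDomain D] (d : D) :
    (algebraMap D (FractionRing D) d)⁻¹ ∈ recip D := by
  rcases eq_or_ne d 0 with rfl | hd
  · simp
  · exact Subring.subset_closure ⟨d, hd, rfl⟩

theorem stmt_14_general {D : Type*} [CommRing D] [IsDomain D]
    (f u : D)
    (hf : algebraMap D (FractionRing D) f ∉ recip D)
    (hu : algebraMap D (FractionRing D) u ∈ recip D) :
    ∃ w : (recip D)ˣ,
      (algebraMap D (FractionRing D) (f + u))⁻¹ =
        ((w : recip D) : FractionRing D) * (algebraMap D (FractionRing D) f)⁻¹ := by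
  have hfu : algebraMap D (FractionRing D) (f + u) ∉ recip D := fun h =>
    hf (by simpa using sub_mem h hu)
  refine Subring.exists_unit_inv_eq_mul_inv (fun h => hfu (h ▸ zero_mem _))
    (fun h => hf (h ▸ zero_mem _)) (inv_algebraMap_mem_recip _) (inv_algebraMap_mem_recip _) ?_
  simpa using hu

/-- Let `D` be E-simple with maximal subfield `K` (the Egyptian
elements together with `0`).  If `f ∈ D \ K` (i.e. `f` is not Egyptian) and `u ∈ K` is
nonzero (i.e. `u ≠ 0` is Egyptian), then `1/(f+u)` and `1/f` are associates in `R(D)`: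
they differ by a unit of `R(D)`. -/
theorem stmt_14 {D : Type*} [CommRing D] [IsDomain D] (hD : ESimple D)
    (f u : D)
    (hf : algebraMap D (FractionRing D) f ∉ recip D)
    (hu0 : u ≠ 0) (hu : algebraMap D (FractionRing D) u ∈ recip D) :
    ∃ w : (recip D)ˣ,
      (algebraMap D (FractionRing D) (f + u))⁻¹ =
        ((w : recip D) : FractionRing D) * (algebraMap D (FractionRing D) f)⁻¹ :=
  stmt_14_general f u hf hu
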